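/- arXiv:1009.3483 — 2 statements merged into one kernel-verified Lean document; each statement's English description precedes it below -/
import Mathlib

section
/- Every innerproduct hyperspace is a normed hyperspace: the function ‖α‖ = √⟨α, α⟩ satisfies (i) ‖α‖ ≥ 0; (ii) ‖α‖ = 0 iff α = θ; (iii) sup{‖x‖ : x ∈ α # β} ≤ ‖α‖ + ‖β‖; (iv) sup{‖x‖ : x ∈ a * α} ≤ |a|‖α‖. -/
/-- Hyperaddition of two sets: `A # B = ⋃_{a∈A, b∈B} a # b`. -/
def hSum {V : Type*} (hadd : V → V → Set V) (A B : Set V) : Set V :=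
  ⋃ a ∈ A, ⋃ b ∈ B, hadd a b

/-- A commutative hypergroup. -/
structure CommHypergroup (V : Type*) where
  hadd : V → V → Set V
  hadd_nonempty : ∀ a b, (hadd a b).Nonempty
  hadd_comm : ∀ a b, hadd a b = hadd b a
  hadd_assoc : ∀ a b c, hSum hadd {a} (hadd b c) = hSum hadd (hadd a b) {c}
  zero : V
  neg : V → V
  neg_spec : ∀ a, zero ∈ hadd a (neg a) ∧ zero ∈ hadd (neg a) a
  neg_unique : ∀ a b, zero ∈ hadd a b → zero ∈ hadd b a → b = neg a
  mem_shift : ∀ a b c, a ∈ hadd b c → b ∈ hadd a (neg c)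

/-- A hyperfield: hyperaddition, ordinary multiplication. -/
structure Hyperfield (F : Type*) extends CommHypergroup F where
  mul : F → F → F
  mul_assoc' : ∀ a b c, mul (mul a b) c = mul a (mul b c)
  mul_comm' : ∀ a b, mul a b = mul b a
  distrib : ∀ a b c, (mul a) '' (hadd b c) = hadd (mul a b) (mul a c)
  mul_zero' : ∀ a, mul a zero = zero
  one : F
  mul_one' : ∀ a, mul a one = a
  mul_inv' : ∀ a, a ≠ zero → ∃ b, mul a b = one

/-- A hypervector space over a hyperfield `K`. -/
structure HypVecSp (F : Type*) (K : Hyperfield F) (V : Type*) extends CommHypergroup V where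
  smul : F → V → Set V
  smul_nonempty : ∀ a α, (smul a α).Nonempty
  smul_hadd : ∀ a α β, (⋃ x ∈ hadd α β, smul a x) ⊆ hSum hadd (smul a α) (smul a β)
  hadd_smul : ∀ a b α, (⋃ c ∈ K.hadd a b, smul c α) ⊆ hSum hadd (smul a α) (smul b α)
  mul_smul' : ∀ a b α, smul (K.mul a b) α = ⋃ x ∈ smul b α, smul a x
  neg_smul' : ∀ a α, smul (K.neg a) α = smul a (neg α)
  one_smul' : ∀ α, α ∈ smul K.one α
  zero_smul' : ∀ α, zero ∈ smul K.zero α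
  zero_smul_zero : smul K.zero zero = {zero}

/-- The hyper-linear combination `λ₁*α₁ # λ₂*α₂ # ⋯ # λₙ*αₙ` of a list of
scalar/vector pairs (the empty combination is `{θ}`, which is neutral for `#`). -/
def combo {F V : Type*} (hadd : V → V → Set V) (smul : F → V → Set V) (z : V) :
    List (F × V) → Set V
  | [] => {z}
  | p :: l => hSum hadd (smul p.1 p.2) (combo hadd smul z l)

/-- The span of a set `A`: all vectors lying in some finite hyper-linear
combination of elements of `A`. -/
def hspan {F V : Type*} (hadd : V → V → Set V) (smul : F → V → Set V) (z : V)
    (A : Set V) : Set V :=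
  {x | ∃ l : List (F × V), l ≠ [] ∧ (∀ p ∈ l, p.2 ∈ A) ∧ x ∈ combo hadd smul z l}

/-- The real hyperfield: a hyperfield structure on `ℝ` whose multiplication,
zero and one are the usual ones. -/
structure RealHyperfield extends Hyperfield ℝ where
  zero_eq : zero = 0
  one_eq : one = 1
  mul_eq : ∀ a b, mul a b = a * b

/-- An innerproduct hyperspace over the real hyperfield. -/
structure InnerHyp (K : RealHyperfield) (V : Type*) extends
    HypVecSp ℝ K.toHyperfield V where
  inner : V → V → ℝ
  inner_pos : ∀ α, α ≠ zero → 0 < inner α α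
  inner_self_eq_zero : ∀ α, inner α α = 0 ↔ α = zero
  inner_symm : ∀ α β, inner α β = inner β α
  sup_hadd : ∀ α β γ, IsLUB ((fun x => inner x γ) '' hadd α β) (inner α γ + inner β γ)
  sup_smul : ∀ a α β, IsLUB ((fun x => inner x β) '' smul a α) (a * inner α β)

section Helpers

lemma CommHypergroup.neg_neg' {V : Type*} (G : CommHypergroup V) (a : V) :
    G.neg (G.neg a) = a :=
  (G.neg_unique (G.neg a) a (G.neg_spec a).2 (G.neg_spec a).1).symm

variable {K : RealHyperfield} {V : Type*} (W : InnerHyp K V)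

lemma IH.smul_le (a : ℝ) (α β : V) {x : V} (hx : x ∈ W.smul a α) :
    W.inner x β ≤ a * W.inner α β :=
  (W.sup_smul a α β).1 ⟨x, hx, rfl⟩

lemma IH.hadd_le (α β γ : V) {x : V} (hx : x ∈ W.hadd α β) :
    W.inner x γ ≤ W.inner α γ + W.inner β γ :=
  (W.sup_hadd α β γ).1 ⟨x, hx, rfl⟩

lemma IH.inner_zero_left (γ : V) : W.inner W.zero γ = 0 := by
  have h := W.sup_smul K.zero W.zero γ
  rw [W.zero_smul_zero, Set.image_singleton] at h
  have h2 := isLUB_singleton.unique h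
  rw [K.zero_eq, zero_mul] at h2
  exact h2

lemma IH.inner_self_nonneg (α : V) : 0 ≤ W.inner α α := by
  by_cases h : α = W.zero
  · rw [h, IH.inner_zero_left]
  · exact (W.inner_pos α h).le

lemma IH.neg_lb (x γ : V) : -(W.inner x γ) ≤ W.inner (W.neg x) γ := by
  have hz : W.zero ∈ W.hadd x (W.neg x) := (W.neg_spec x).1
  have h := IH.hadd_le W x (W.neg x) γ hz
  rw [IH.inner_zero_left] at h
  linarith

lemma IH.neg_mem_smul (x : V) : W.neg x ∈ W.smul (K.neg K.one) x := by
  rw [W.neg_smul']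
  exact W.one_smul' (W.neg x)

lemma IH.neg_ub (x γ : V) :
    W.inner (W.neg x) γ ≤ K.neg K.one * W.inner x γ :=
  IH.smul_le W _ x γ (IH.neg_mem_smul W x)

lemma RealHyperfield.neg_eq_mul (K : RealHyperfield) (a : ℝ) :
    K.neg a = a * K.neg K.one := by
  have h1 : K.zero ∈ K.hadd K.one (K.neg K.one) := (K.neg_spec K.one).1
  have hmem : K.mul a K.zero ∈ (K.mul a) '' K.hadd K.one (K.neg K.one) :=
    ⟨K.zero, h1, rfl⟩
  rw [K.distrib, K.mul_zero', K.mul_one'] at hmem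
  rw [K.mul_eq] at hmem
  have h2 : K.zero ∈ K.hadd (a * K.neg K.one) a := by
    rw [K.hadd_comm]; exact hmem
  exact (K.neg_unique a (a * K.neg K.one) hmem h2).symm

lemma RealHyperfield.neg_one_sq (K : RealHyperfield) :
    K.neg K.one = 1 ∨ K.neg K.one = -1 := by
  have h0 : K.neg (K.neg K.one) = K.one := CommHypergroup.neg_neg' _ K.one
  rw [RealHyperfield.neg_eq_mul K (K.neg K.one)] at h0
  exact mul_self_eq_one_iff.1 (h0.trans K.one_eq)

lemma IH.neg_inner (hc : K.neg K.one = -1) (x γ : V) :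
    W.inner (W.neg x) γ = -(W.inner x γ) := by
  have h1 := IH.neg_ub W x γ
  rw [hc] at h1
  have h2 := IH.neg_lb W x γ
  linarith

lemma IH.quad (α β : V) {t : ℝ} (ht : 0 ≤ t) :
    0 ≤ t ^ 2 * W.inner α α + 2 * t * W.inner α β + W.inner β β := by
  obtain ⟨z, hz⟩ := W.smul_nonempty t α
  obtain ⟨w, hw⟩ := W.hadd_nonempty z β
  have h0 : 0 ≤ W.inner w w := IH.inner_self_nonneg W w
  have h1 : W.inner w w ≤ W.inner z w + W.inner β w := IH.hadd_le W z β w hw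
  have h2 : W.inner w z ≤ W.inner z z + W.inner β z := IH.hadd_le W z β z hw
  have h3 : W.inner w β ≤ W.inner z β + W.inner β β := IH.hadd_le W z β β hw
  have h4 : W.inner z z ≤ t * W.inner α z := IH.smul_le W t α z hz
  have h5 : W.inner z α ≤ t * W.inner α α := IH.smul_le W t α α hz
  have h6 : W.inner z β ≤ t * W.inner α β := IH.smul_le W t α β hz
  have e1 : W.inner z w = W.inner w z := W.inner_symm z w
  have e2 : W.inner β w = W.inner w β := W.inner_symm β w
  have e3 : W.inner β z = W.inner z β := W.inner_symm β z
  have e4 : W.inner α z = W.inner z α := W.inner_symm α z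
  nlinarith [mul_le_mul_of_nonneg_left h5 ht, mul_le_mul_of_nonneg_left h6 ht]

lemma IH.quad' (hc : K.neg K.one = -1) (α β : V) (t : ℝ) :
    0 ≤ t ^ 2 * W.inner α α + 2 * t * W.inner α β + W.inner β β := by
  rcases le_or_gt 0 t with ht | ht
  · exact IH.quad W α β ht
  · have h := IH.quad W α (W.neg β) (t := -t) (by linarith)
    have e1 : W.inner α (W.neg β) = -(W.inner α β) := by
      rw [W.inner_symm, IH.neg_inner W hc, W.inner_symm]
    have e2 : W.inner (W.neg β) (W.neg β) = W.inner β β := by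
      rw [IH.neg_inner W hc, W.inner_symm, IH.neg_inner W hc, neg_neg]
    rw [e1, e2] at h
    nlinarith

lemma IH.cs (hc : K.neg K.one = -1) (α β : V) :
    (W.inner α β) ^ 2 ≤ W.inner α α * W.inner β β := by
  by_cases hA : W.inner α α = 0
  · have hz : α = W.zero := (W.inner_self_eq_zero α).1 hA
    rw [hz, IH.inner_zero_left, IH.inner_zero_left]
    simp
  · have hApos : 0 < W.inner α α := lt_of_le_of_ne (IH.inner_self_nonneg W α) (Ne.symm hA)
    have h := IH.quad' W hc α β (-(W.inner α β) / W.inner α α)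
    have h2 : (-(W.inner α β) / W.inner α α) * W.inner α α = -(W.inner α β) :=
      div_mul_cancel₀ _ hA
    nlinarith [sq_nonneg (W.inner α β), sq_nonneg (-(W.inner α β) / W.inner α α)]

lemma IH.cs' (hc : K.neg K.one = -1) (α β : V) :
    W.inner α β ≤ Real.sqrt (W.inner α α) * Real.sqrt (W.inner β β) := by
  have h := IH.cs W hc α β
  calc W.inner α β ≤ |W.inner α β| := le_abs_self _
    _ = Real.sqrt ((W.inner α β) ^ 2) := (Real.sqrt_sq_eq_abs _).symm
    _ ≤ Real.sqrt (W.inner α α * W.inner β β) := Real.sqrt_le_sqrt h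
    _ = _ := Real.sqrt_mul (IH.inner_self_nonneg W α) _

end Helpers
/-- Every innerproduct hyperspace is a normed hyperspace: `‖α‖ = √⟨α,α⟩`
satisfies the four norm axioms. -/
theorem inner_hyperspace_is_normed {K : RealHyperfield} {V : Type*}
    (W : InnerHyp K V) :
    (∀ α : V, 0 ≤ Real.sqrt (W.inner α α)) ∧
    (∀ α : V, Real.sqrt (W.inner α α) = 0 ↔ α = W.zero) ∧
    (∀ α β : V, ∀ x ∈ W.hadd α β,
      Real.sqrt (W.inner x x) ≤ Real.sqrt (W.inner α α) + Real.sqrt (W.inner β β)) ∧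
    (∀ (a : ℝ) (α : V), ∀ x ∈ W.smul a α,
      Real.sqrt (W.inner x x) ≤ |a| * Real.sqrt (W.inner α α)) := by
  have part2 : ∀ α : V, Real.sqrt (W.inner α α) = 0 ↔ α = W.zero := by
    intro α
    rw [Real.sqrt_eq_zero (IH.inner_self_nonneg W α)]
    exact W.inner_self_eq_zero α
  rcases RealHyperfield.neg_one_sq K with hc | hc
  · -- degenerate case: K.neg K.one = 1, then V = {zero}
    have pos : ∀ x γ : V, 0 ≤ W.inner x γ := by
      intro x γ
      have h1 := IH.neg_ub W x γ
      have h2 := IH.neg_ub W (W.neg x) γ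
      rw [CommHypergroup.neg_neg' W.toCommHypergroup x, hc, one_mul] at h2
      rw [hc, one_mul] at h1
      have h3 := IH.neg_lb W x γ
      linarith
    have triv : ∀ α : V, α = W.zero := by
      intro α
      obtain ⟨x, hx⟩ := W.smul_nonempty (-1) α
      have h1 := IH.smul_le W (-1) α α hx
      have h2 := pos x α
      have h3 := IH.inner_self_nonneg W α
      exact (W.inner_self_eq_zero α).1 (by linarith)
    refine ⟨fun α => Real.sqrt_nonneg _, part2, ?_, ?_⟩
    · intro α β x hx
      rw [triv x, IH.inner_zero_left, Real.sqrt_zero]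
      positivity
    · intro a α x hx
      rw [triv x, IH.inner_zero_left, Real.sqrt_zero]
      positivity
  · -- main case: K.neg K.one = -1
    refine ⟨fun α => Real.sqrt_nonneg _, part2, ?_, ?_⟩
    · intro α β x hx
      have h1 : W.inner x x ≤ W.inner α x + W.inner β x := IH.hadd_le W α β x hx
      have h2 := IH.cs' W hc α x
      have h3 := IH.cs' W hc β x
      have key : W.inner x x ≤
          (Real.sqrt (W.inner α α) + Real.sqrt (W.inner β β)) * Real.sqrt (W.inner x x) := by
        linarith
      have hx0 : Real.sqrt (W.inner x x) * Real.sqrt (W.inner x x) = W.inner x x :=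
        Real.mul_self_sqrt (IH.inner_self_nonneg W x)
      rcases eq_or_lt_of_le (Real.sqrt_nonneg (W.inner x x)) with h | h
      · rw [← h]; positivity
      · nlinarith
    · intro a α x hx
      have h1 : W.inner x x ≤ a * W.inner α x := IH.smul_le W a α x hx
      have key : W.inner x x ≤ a ^ 2 * W.inner α α := by
        rcases le_or_gt 0 a with ha | ha
        · have h2 : W.inner x α ≤ a * W.inner α α := IH.smul_le W a α α hx
          have e : W.inner α x = W.inner x α := W.inner_symm α x
          nlinarith
        · have hmem : W.neg x ∈ W.smul (K.mul (K.neg K.one) a) α := by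
            rw [W.mul_smul']
            exact Set.mem_biUnion hx (IH.neg_mem_smul W x)
          rw [K.mul_eq, hc] at hmem
          have h2 : W.inner (W.neg x) α ≤ -1 * a * W.inner α α :=
            IH.smul_le W _ α α hmem
          rw [IH.neg_inner W hc] at h2
          have e : W.inner α x = W.inner x α := W.inner_symm α x
          nlinarith
      calc Real.sqrt (W.inner x x) ≤ Real.sqrt (a ^ 2 * W.inner α α) :=
            Real.sqrt_le_sqrt key
        _ = |a| * Real.sqrt (W.inner α α) := by
            rw [Real.sqrt_mul (sq_nonneg a), Real.sqrt_sq_eq_abs]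
end

section
/- In an innerproduct hyperspace V, any orthogonal set of non-zero vectors is weak linearly independent: for any finite orthogonal set {α₁, ..., αₙ} of non-zero vectors, if 0 * P = λ₁ * α₁ # λ₂ * α₂ # ... # λₙ * αₙ for some subset P ⊆ V and scalars λ₁, ..., λₙ ∈ ℝ, then λ₁ = λ₂ = ... = λₙ = 0. -/
/-! Fix `i` and take suprema of `x ↦ ⟨x, αᵢ⟩`. By `sup_hadd` and `sup_smul` this supremum is
additive over `#` and homogeneous over `*`, so over `λ₁*α₁ # ⋯ # λₙ*αₙ` it equals
`∑ⱼ λⱼ⟨αⱼ, αᵢ⟩ = λᵢ⟨αᵢ, αᵢ⟩` by orthogonality, while over `0 * P` it is `0`.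
As `⟨αᵢ, αᵢ⟩ > 0`, this forces `λᵢ = 0`. -/

open Set Pointwise

theorem isLUB_biUnion_iff_of_isLUB {ι α : Type*} [Preorder α] {s : Set ι} {t : ι → Set α}
    {u : ι → α} (ht : ∀ i ∈ s, IsLUB (t i) (u i)) (c : α) :
    IsLUB (u '' s) c ↔ IsLUB (⋃ i ∈ s, t i) c := by
  refine isLUB_congr ?_
  simp_rw [upperBounds_iUnion, image_eq_iUnion, upperBounds_iUnion, upperBounds_singleton]
  exact iInter₂_congr fun i hi => (ht i hi).upperBounds_eq.symm

section HyperLUB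

variable {V : Type*} (hadd : V → V → Set V) {f : V → ℝ}

theorem isLUB_image_hSum (hf : ∀ a b, IsLUB (f '' hadd a b) (f a + f b)) {A B : Set V}
    {a b : ℝ} (hA : IsLUB (f '' A) a) (hB : IsLUB (f '' B) b) :
    IsLUB (f '' hSum hadd A B) (a + b) := by
  have hunion : f '' hSum hadd A B = ⋃ p ∈ A ×ˢ B, f '' hadd p.1 p.2 := by
    rw [biUnion_prod']
    simp only [hSum, image_iUnion₂]
  have hsups : (fun p : V × V => f p.1 + f p.2) '' A ×ˢ B = f '' A + f '' B := by
    rw [← image2_add, image2_image_left, image2_image_right, ← image_prod]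
  rw [hunion, ← isLUB_biUnion_iff_of_isLUB (fun p _ => hf p.1 p.2), hsups]
  exact hA.add hB

theorem isLUB_image_combo {F : Type*} (smul : F → V → Set V) {z : V} (hz : f z = 0)
    (hf : ∀ a b, IsLUB (f '' hadd a b) (f a + f b)) {g : F × V → ℝ}
    (hg : ∀ p : F × V, IsLUB (f '' smul p.1 p.2) (g p)) (L : List (F × V)) :
    IsLUB (f '' combo hadd smul z L) (L.map g).sum := by
  induction L with
  | nil => simp [combo, hz]
  | cons p L ih => simpa [combo] using isLUB_image_hSum hadd hf (hg p) ih

end HyperLUB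

namespace InnerHyp

variable {K : RealHyperfield} {V : Type*} (W : InnerHyp K V)

theorem inner_zero_left (β : V) : W.inner W.zero β = 0 := by
  have h := W.sup_smul 0 W.zero β
  rw [← K.zero_eq, W.zero_smul_zero, image_singleton, K.zero_eq, zero_mul] at h
  exact isLUB_singleton.unique h

theorem isLUB_inner_combo (β : V) (L : List (ℝ × V)) :
    IsLUB ((W.inner · β) '' combo W.hadd W.smul W.zero L)
      (L.map fun p => p.1 * W.inner p.2 β).sum :=
  isLUB_image_combo W.hadd W.smul (f := (W.inner · β)) (W.inner_zero_left β)
    (fun a b => W.sup_hadd a b β) (fun p => W.sup_smul p.1 p.2 β) L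

theorem isLUB_inner_biUnion_smul_zero {P : Set V} (hP : P.Nonempty) (β : V) :
    IsLUB ((W.inner · β) '' ⋃ p ∈ P, W.smul 0 p) 0 := by
  rw [image_iUnion₂, ← isLUB_biUnion_iff_of_isLUB (fun p _ => W.sup_smul 0 p β)]
  simp [hP.image_const]

end InnerHyp

/-- Any finite orthogonal set of non-zero vectors is weak linearly independent:
if `0 * P = λ₁*α₁ # ⋯ # λₙ*αₙ` for some nonempty `P ⊆ V`, then all `λᵢ = 0`. -/
theorem orthogonal_weak_lin_indep {K : RealHyperfield} {V : Type*} (W : InnerHyp K V)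
    {n : ℕ} (α : Fin n → V)
    (hne : ∀ i, α i ≠ W.zero)
    (horth : ∀ i j, i ≠ j → W.inner (α i) (α j) = 0)
    (P : Set V) (hP : P.Nonempty) (l : Fin n → ℝ)
    (h : (⋃ p ∈ P, W.smul 0 p)
        = combo W.hadd W.smul W.zero (List.ofFn fun i => (l i, α i))) :
    ∀ i, l i = 0 := by
  intro i
  have hsum : ((List.ofFn fun j => (l j, α j)).map
      fun p => p.1 * W.inner p.2 (α i)).sum = l i * W.inner (α i) (α i) := by
    rw [List.map_ofFn, List.sum_ofFn]
    exact Fintype.sum_eq_single i fun j hj => by simp [horth j i hj]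
  have hcombo := W.isLUB_inner_combo (α i) (List.ofFn fun j => (l j, α j))
  rw [← h, hsum] at hcombo
  have hzero : l i * W.inner (α i) (α i) = 0 :=
    hcombo.unique (W.isLUB_inner_biUnion_smul_zero hP (α i))
  exact (mul_eq_zero.1 hzero).resolve_right (W.inner_pos _ (hne i)).ne'
end
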